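/- If w is a geodesic word over S = {a, a⁻¹, t} for the group Ĥ, then w contains at most 7 instances of the letter t. -/

import Mathlib

/-- The three generators `a, b, t` of the virtually Heisenberg group `Ĥ`. -/
inductive VGen : Type
  | a | b | t
deriving DecidableEq

open scoped commutatorElement

/-- Relators of the virtually Heisenberg group
`Ĥ = ⟨a,b,t ∣ [a,[a,b]] = [b,[a,b]] = t² = 1, tat = b⟩`. -/
def VRels : Set (FreeGroup VGen) :=
  { ⁅FreeGroup.of VGen.a, ⁅FreeGroup.of VGen.a, FreeGroup.of VGen.b⁆⁆,
    ⁅FreeGroup.of VGen.b, ⁅FreeGroup.of VGen.a, FreeGroup.of VGen.b⁆⁆,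
    FreeGroup.of VGen.t ^ 2,
    FreeGroup.of VGen.t * FreeGroup.of VGen.a * FreeGroup.of VGen.t *
      (FreeGroup.of VGen.b)⁻¹ }

/-- The virtually Heisenberg group `Ĥ`. -/
abbrev VH : Type := PresentedGroup VRels

/-- The generator `a` of `Ĥ`. -/
def Va : VH := PresentedGroup.of VGen.a

/-- The generator `b` of `Ĥ`. -/
def Vb : VH := PresentedGroup.of VGen.b

/-- The generator `t` of `Ĥ`. -/
def Vt : VH := PresentedGroup.of VGen.t

/-- The three letters of the alphabet `S = {a, a⁻¹, t}`. -/
inductive SLetter : Type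
  | a | A | t
deriving DecidableEq

/-- The element of `Ĥ` represented by a letter of `S`. -/
def SLetter.toV : SLetter → VH
  | .a => Va
  | .A => Va⁻¹
  | .t => Vt

/-- The element of `Ĥ` represented by a word over `S`. -/
def evalS (w : List SLetter) : VH := (w.map SLetter.toV).prod

/-- The word `a^k` over `S`, for `k ∈ ℤ`. -/
def apowS (k : ℤ) : List SLetter :=
  if 0 ≤ k then List.replicate k.toNat SLetter.a else List.replicate (-k).toNat SLetter.A

/-- The word length `ℓ_S(g)` of `g ∈ Ĥ` with respect to `S`. -/
noncomputable def lenS (g : VH) : ℕ :=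
  sInf { n | ∃ w : List SLetter, evalS w = g ∧ w.length = n }

/-- A word over `S` is geodesic if its length equals the word length of the
element it represents. -/
def IsGeodesicS (w : List SLetter) : Prop := w.length = lenS (evalS w)

/-!
Every element of `Ĥ` can be written `b^y a^x [a,b]^c t^f`, and reading a word letter by letter
changes these coordinates by explicit formulas, so words with equal coordinates are equal in `Ĥ`.
Let a word have `A` letters `a^{±1}` behind an even and `B` behind an odd number of `t`s. Then
`A ≡ x`, `B ≡ y (mod 2)` and `2|2c - xy| + 2|xy| ≤ (A + |x|)(B + |y|)`: the `a`-coordinate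
sweeps an interval `[m, M] ∋ 0` with `2(M - m) ≤ A + |x|`, and each of the `B` letters moves `c`
by `±x` with `x ∈ [m, M]`. Conversely, explicit families of words `a^{p₀} t a^{p₁} t ⋯ t a^{p₆}`
reach every `(x, y, c)` obeying these constraints within the same budget `A + B`. Appending one
more `t` if needed gives a word for the same element of length at most `A + B + 7`, so a word
with at least eight `t`s is not geodesic.
-/

theorem Vt_mul_Vt : Vt * Vt = 1 := by
  have h := PresentedGroup.one_of_mem (rels := VRels) (x := FreeGroup.of VGen.t ^ 2)
    (by simp [VRels])
  rwa [map_pow, pow_two] at h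

theorem Vt_mul_Va_mul_Vt : Vt * Va * Vt = Vb :=
  PresentedGroup.mk_eq_mk_of_mul_inv_mem (by simp [VRels])

theorem Vt_mul_Va : Vt * Va = Vb * Vt := by
  rw [← Vt_mul_Va_mul_Vt, mul_assoc _ Vt, Vt_mul_Vt, mul_one]

def Vz : VH := ⁅Va, Vb⁆

theorem commute_Va_Vz : Commute Va Vz := by
  have h := PresentedGroup.one_of_mem (rels := VRels)
    (x := ⁅FreeGroup.of VGen.a, ⁅FreeGroup.of VGen.a, FreeGroup.of VGen.b⁆⁆) (by simp [VRels])
  rw [map_commutatorElement, map_commutatorElement] at h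
  exact commutatorElement_eq_one_iff_commute.mp h

theorem commute_Vb_Vz : Commute Vb Vz := by
  have h := PresentedGroup.one_of_mem (rels := VRels)
    (x := ⁅FreeGroup.of VGen.b, ⁅FreeGroup.of VGen.a, FreeGroup.of VGen.b⁆⁆) (by simp [VRels])
  rw [map_commutatorElement, map_commutatorElement] at h
  exact commutatorElement_eq_one_iff_commute.mp h

theorem Va_mul_Vb : Va * Vb = Vz * Vb * Va := by
  simp only [Vz, commutatorElement_def]; group

theorem Va_inv_mul_Vb : Va⁻¹ * Vb = Vz⁻¹ * Vb * Va⁻¹ := by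
  rw [eq_mul_inv_iff_mul_eq, mul_assoc, inv_mul_eq_iff_eq_mul, ← mul_assoc,
    commute_Va_Vz.inv_right.eq, mul_assoc, Va_mul_Vb]
  group

theorem Va_zpow_mul_Vb (n : ℤ) : Va ^ n * Vb = Vz ^ n * Vb * Va ^ n := by
  induction n using Int.induction_on with
  | zero => simp
  | succ n ih =>
    calc Va ^ ((n : ℤ) + 1) * Vb = Va ^ (n : ℤ) * Vz * Vb * Va := by
          rw [zpow_add_one, mul_assoc, Va_mul_Vb]; group
      _ = Vz * (Va ^ (n : ℤ) * Vb) * Va := by rw [(commute_Va_Vz.zpow_left _).eq]; group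
      _ = Vz ^ ((n : ℤ) + 1) * Vb * Va ^ ((n : ℤ) + 1) := by rw [ih]; group
  | pred n ih =>
    calc Va ^ (-(n : ℤ) - 1) * Vb = Va ^ (-(n : ℤ)) * Vz⁻¹ * Vb * Va⁻¹ := by
          rw [zpow_sub_one, mul_assoc, Va_inv_mul_Vb]; group
      _ = Vz⁻¹ * (Va ^ (-(n : ℤ)) * Vb) * Va⁻¹ := by
          rw [(commute_Va_Vz.inv_right.zpow_left _).eq]; group
      _ = Vz ^ (-(n : ℤ) - 1) * Vb * Va ^ (-(n : ℤ) - 1) := by rw [ih]; group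

theorem Va_zpow_mul_Vb_zpow (x n : ℤ) : Va ^ x * Vb ^ n = Vz ^ (x * n) * Vb ^ n * Va ^ x := by
  have h : SemiconjBy (Va ^ x) Vb (Vz ^ x * Vb) := by
    rw [SemiconjBy, Va_zpow_mul_Vb]
  have := h.zpow_right n
  rwa [SemiconjBy, ((commute_Vb_Vz.zpow_right x).symm.mul_zpow n), ← zpow_mul] at this

theorem Vt_mul_Va_zpow (n : ℤ) : Vt * Va ^ n = Vb ^ n * Vt :=
  (show SemiconjBy Vt Va Vb from Vt_mul_Va).zpow_right n

structure Coord where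
  x : ℤ
  y : ℤ
  c : ℤ
  flip : Bool

namespace Coord

def addA : Coord → ℤ → Coord
  | ⟨x, y, c, false⟩, n => ⟨x + n, y, c, false⟩
  | ⟨x, y, c, true⟩, n => ⟨x, y + n, c + x * n, true⟩

def flipT (s : Coord) : Coord := ⟨s.x, s.y, s.c, !s.flip⟩

def step (s : Coord) : SLetter → Coord
  | .a => s.addA 1
  | .A => s.addA (-1)
  | .t => s.flipT

theorem addA_addA (s : Coord) (m n : ℤ) : (s.addA m).addA n = s.addA (m + n) := by
  obtain ⟨x, y, c, _ | _⟩ := s <;> simp only [addA] <;> ring_nf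

def toVH (s : Coord) : VH := Vb ^ s.y * Va ^ s.x * Vz ^ s.c * Vt ^ s.flip.toNat

theorem toVH_addA (s : Coord) (n : ℤ) : (s.addA n).toVH = s.toVH * Va ^ n := by
  obtain ⟨x, y, c, _ | _⟩ := s
  · simp only [addA, toVH, Bool.toNat_false, pow_zero, mul_one, zpow_add, mul_assoc,
      (commute_Va_Vz.zpow_zpow n c).eq]
  · have hz : Commute (Vz ^ (x * n)) (Vb ^ n * Va ^ x) :=
      ((commute_Vb_Vz.zpow_zpow n (x * n)).mul_left (commute_Va_Vz.zpow_zpow x (x * n))).symm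
    calc Vb ^ (y + n) * Va ^ x * Vz ^ (c + x * n) * Vt ^ (1 : ℕ)
        = Vb ^ y * (Vz ^ (x * n) * Vb ^ n * Va ^ x) * Vz ^ c * Vt := by
          rw [mul_assoc (Vz ^ (x * n)), hz.eq]; group
      _ = Vb ^ y * Va ^ x * Vb ^ n * Vz ^ c * Vt := by
          rw [← Va_zpow_mul_Vb_zpow]; group
      _ = Vb ^ y * Va ^ x * Vz ^ c * (Vt * Va ^ n) := by
          rw [mul_assoc _ (Vb ^ n), (commute_Vb_Vz.zpow_zpow n c).eq, Vt_mul_Va_zpow]; group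
      _ = _ := by simp only [toVH, Bool.toNat_true, pow_one, mul_assoc]

theorem toVH_flipT (s : Coord) : s.flipT.toVH = s.toVH * Vt := by
  obtain ⟨x, y, c, _ | _⟩ := s <;>
    simp [flipT, toVH, mul_assoc, Vt_mul_Vt]

theorem toVH_step (s : Coord) (l : SLetter) : (s.step l).toVH = s.toVH * l.toV := by
  cases l
  · exact (s.toVH_addA 1).trans (by rw [zpow_one]; rfl)
  · exact (s.toVH_addA (-1)).trans (by rw [zpow_neg_one]; rfl)
  · exact s.toVH_flipT

end Coord

def coordS (w : List SLetter) : Coord := w.foldl Coord.step ⟨0, 0, 0, false⟩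

theorem Coord.toVH_foldl (s : Coord) (w : List SLetter) :
    (w.foldl Coord.step s).toVH = s.toVH * evalS w := by
  induction w generalizing s with
  | nil => simp [evalS]
  | cons l w ih =>
    rw [List.foldl_cons, ih, Coord.toVH_step]
    simp only [evalS, List.map_cons, List.prod_cons, mul_assoc]

theorem evalS_eq_toVH_coordS (w : List SLetter) : evalS w = (coordS w).toVH := by
  rw [coordS, Coord.toVH_foldl]
  simp [Coord.toVH]

theorem evalS_eq_of_coordS_eq {w w' : List SLetter} (h : coordS w = coordS w') :
    evalS w = evalS w' := by
  rw [evalS_eq_toVH_coordS, evalS_eq_toVH_coordS, h]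

theorem foldl_step_replicate (s : Coord) (l : SLetter) (n : ℕ) (k : ℤ)
    (hl : ∀ s : Coord, s.step l = s.addA k) :
    (List.replicate n l).foldl Coord.step s = s.addA (n * k) := by
  induction n generalizing s with
  | zero => obtain ⟨x, y, c, _ | _⟩ := s <;> simp [Coord.addA]
  | succ n ih =>
    rw [List.replicate_succ, List.foldl_cons, ih, hl, Coord.addA_addA]
    push_cast
    ring_nf

theorem foldl_step_apowS (s : Coord) (n : ℤ) : (apowS n).foldl Coord.step s = s.addA n := by
  unfold apowS
  split_ifs with hn
  · rw [foldl_step_replicate s .a _ 1 fun _ => rfl]; congr 1; omega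
  · rw [foldl_step_replicate s .A _ (-1) fun _ => rfl]; congr 1; omega

theorem length_apowS (n : ℤ) : (apowS n).length = n.natAbs := by
  unfold apowS; split_ifs <;> simp <;> omega

theorem lenS_le_length {w : List SLetter} {g : VH} (h : evalS w = g) : lenS g ≤ w.length :=
  Nat.sInf_le ⟨w, h, rfl⟩

theorem even_abs_sub_self (n : ℤ) : Even (|n| - n) :=
  Int.even_sub.mpr even_abs

theorem abs_two_mul_sub_mul_le_of_le_of_le {B y c M m M' m' : ℤ} (hy : |y| ≤ B) (hM : M ≤ M')
    (hm : m' ≤ m) (h : |2 * c - y * (M + m)| ≤ B * (M - m)) :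
    |2 * c - y * (M' + m')| ≤ B * (M' - m') := by
  obtain ⟨hy₁, hy₂⟩ := abs_le.mp hy
  obtain ⟨h₁, h₂⟩ := abs_le.mp h
  have k₁ := mul_nonneg (by linarith : 0 ≤ B + y) (sub_nonneg.mpr hM)
  have k₂ := mul_nonneg (by linarith : 0 ≤ B - y) (sub_nonneg.mpr hm)
  exact abs_le.mpr ⟨by nlinarith, by nlinarith⟩

namespace Coord

/-- Invariant along a word: `A` and `B` count the letters `a^{±1}` read behind an even resp. odd
number of `t`s, and `[m, M]` contains `0` and every `a`-coordinate visited so far. -/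
def Feasible (s : Coord) (A B : ℤ) : Prop :=
  Even (A - s.x) ∧ Even (B - s.y) ∧ |s.y| ≤ B ∧
    ∃ M m : ℤ, m ≤ min 0 s.x ∧ max 0 s.x ≤ M ∧ 2 * (M - m) ≤ A + |s.x| ∧
      |2 * s.c - s.y * (M + m)| ≤ B * (M - m)

theorem Feasible.moveX {x y c A B : ℤ} {f : Bool} (h : Feasible ⟨x, y, c, f⟩ A B) (n : ℤ)
    (f' : Bool) : Feasible ⟨x + n, y, c, f'⟩ (A + |n|) B := by
  obtain ⟨hA, hB, hy, M, m, hm, hM, hvar, harea⟩ := h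
  refine ⟨by simpa [add_sub_add_comm] using hA.add (even_abs_sub_self n), hB, hy,
    max M (x + n), min m (x + n), ?_, ?_, ?_,
    abs_two_mul_sub_mul_le_of_le_of_le hy (le_max_left _ _) (min_le_left _ _) harea⟩
  · simp only at hm ⊢; omega
  · simp only at hM ⊢; omega
  · simp only [abs_eq_max_neg] at hm hM hvar ⊢
    omega

theorem Feasible.moveY {x y c A B : ℤ} {f : Bool} (h : Feasible ⟨x, y, c, f⟩ A B) (n : ℤ)
    (f' : Bool) : Feasible ⟨x, y + n, c + x * n, f'⟩ A (B + |n|) := by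
  obtain ⟨hA, hB, hy, M, m, hm, hM, hvar, harea⟩ := h
  simp only at hm hM
  refine ⟨hA, by simpa [add_sub_add_comm] using hB.add (even_abs_sub_self n),
    (abs_add_le y n).trans (by simpa using hy), M, m, hm, hM, hvar, ?_⟩
  have hx : |2 * x - (M + m)| ≤ M - m := abs_le.mpr ⟨by omega, by omega⟩
  calc |2 * (c + x * n) - (y + n) * (M + m)|
      = |(2 * c - y * (M + m)) + n * (2 * x - (M + m))| := by ring_nf
    _ ≤ B * (M - m) + |n| * (M - m) := by
      grw [abs_add_le, abs_mul, harea, hx]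
    _ = (B + |n|) * (M - m) := by ring

theorem Feasible.step {s : Coord} {A B : ℤ} (h : s.Feasible A B) (l : SLetter) :
    ∃ A' B', A' + B' + [l].count .t = A + B + 1 ∧ (s.step l).Feasible A' B' := by
  obtain ⟨x, y, c, _ | _⟩ := s <;> cases l <;> simp only [Coord.step, addA, flipT]
  · exact ⟨A + 1, B, by simp [add_right_comm], by simpa using h.moveX 1 false⟩
  · exact ⟨A + 1, B, by simp [add_right_comm], by simpa using h.moveX (-1) false⟩
  · exact ⟨A, B, by simp, h⟩
  · exact ⟨A, B + 1, by simp [add_assoc], by simpa using h.moveY 1 true⟩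
  · exact ⟨A, B + 1, by simp [add_assoc], by simpa using h.moveY (-1) true⟩
  · exact ⟨A, B, by simp, h⟩

theorem Feasible.foldl {s : Coord} {A B : ℤ} (h : s.Feasible A B) (w : List SLetter) :
    ∃ A' B', A' + B' + w.count .t = A + B + w.length ∧ (w.foldl Coord.step s).Feasible A' B' := by
  induction w generalizing s A B with
  | nil => exact ⟨A, B, by simp, h⟩
  | cons l w ih =>
    obtain ⟨A₁, B₁, h₁, hs⟩ := h.step l
    obtain ⟨A', B', h', hw⟩ := ih hs
    refine ⟨A', B', ?_, hw⟩
    rw [← List.singleton_append, List.count_append, List.length_append, List.length_singleton]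
    push_cast
    linarith

theorem Feasible.abs_x_le {s : Coord} {A B : ℤ} (h : s.Feasible A B) : |s.x| ≤ A := by
  obtain ⟨-, -, -, M, m, hm, hM, hvar, -⟩ := h
  simp only [abs_eq_max_neg] at hm hM hvar ⊢
  omega

theorem Feasible.area_bound {s : Coord} {A B : ℤ} (h : s.Feasible A B) :
    2 * |2 * s.c - s.x * s.y| + 2 * |s.x * s.y| ≤ (A + |s.x|) * (B + |s.y|) := by
  obtain ⟨x, y, c, f⟩ := s
  obtain ⟨-, -, hy, M, m, hm, hM, hvar, harea⟩ := h
  simp only at hy hm hM hvar harea ⊢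
  have hx : |M + m - x| + |x| ≤ M - m := by
    simp only [abs_eq_max_neg] at hm hM ⊢
    omega
  have hc : |2 * c - x * y| ≤ B * (M - m) + |y| * |M + m - x| := calc
    |2 * c - x * y| = |(2 * c - y * (M + m)) + y * (M + m - x)| := by ring_nf
    _ ≤ _ := by grw [abs_add_le, abs_mul, harea]
  have hB : 0 ≤ B + |y| := by linarith [abs_nonneg y]
  rw [abs_mul]
  nlinarith [mul_le_mul_of_nonneg_left hx (abs_nonneg y), mul_le_mul_of_nonneg_right hvar hB]

end Coord

theorem feasible_coordS (w : List SLetter) :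
    ∃ A B : ℤ, A + B + w.count .t = w.length ∧ (coordS w).Feasible A B := by
  have h₀ : Coord.Feasible ⟨0, 0, 0, false⟩ 0 0 :=
    ⟨by simp, by simp, by simp, 0, 0, by simp, by simp, by simp, by simp⟩
  simpa [coordS] using Coord.Feasible.foldl h₀ w

/-- `(x, y, c)` are the coordinates of `a^{p₀} t a^{p₁} t ⋯ t a^{p₆}`, whose letters `a^{±1}`
number at most `A` behind an even and at most `B` behind an odd number of `t`s. -/
def SevenBlockRep (x y c A B : ℤ) : Prop :=
  ∃ p₀ p₁ p₂ p₃ p₄ p₅ p₆ : ℤ, p₀ + p₂ + p₄ + p₆ = x ∧ p₁ + p₃ + p₅ = y ∧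
    p₀ * p₁ + (p₀ + p₂) * p₃ + (p₀ + p₂ + p₄) * p₅ = c ∧
    |p₀| + |p₂| + |p₄| + |p₆| ≤ A ∧ |p₁| + |p₃| + |p₅| ≤ B

namespace SevenBlockRep

variable {x y c A B : ℤ}

theorem negX (h : SevenBlockRep x y c A B) : SevenBlockRep (-x) y (-c) A B := by
  obtain ⟨p₀, p₁, p₂, p₃, p₄, p₅, p₆, hx, hy, hc, hA, hB⟩ := h
  exact ⟨-p₀, p₁, -p₂, p₃, -p₄, p₅, -p₆, by linarith, hy, by linear_combination -hc,
    by simpa using hA, hB⟩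

theorem negY (h : SevenBlockRep x y c A B) : SevenBlockRep x (-y) (-c) A B := by
  obtain ⟨p₀, p₁, p₂, p₃, p₄, p₅, p₆, hx, hy, hc, hA, hB⟩ := h
  exact ⟨p₀, -p₁, p₂, -p₃, p₄, -p₅, p₆, hx, by linarith, by linear_combination -hc,
    hA, by simpa using hB⟩

/-- Reading the blocks backwards pairs each `a`-block with the `b`-blocks on its other side. -/
theorem reverse (h : SevenBlockRep x y c A B) : SevenBlockRep x y (x * y - c) A B := by
  obtain ⟨p₀, p₁, p₂, p₃, p₄, p₅, p₆, hx, hy, hc, hA, hB⟩ := h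
  exact ⟨p₆, p₅, p₄, p₃, p₂, p₁, p₀, by linarith, by linarith,
    by rw [← hx, ← hy, ← hc]; ring, by linarith, by linarith⟩

end SevenBlockRep

theorem exists_ceil_div {D K N : ℤ} (hD : 0 < D) (hK : 0 < K) (hKN : K ≤ D * N) :
    ∃ q, 1 ≤ q ∧ q ≤ N ∧ D * (q - 1) < K ∧ K ≤ D * q := by
  have h₀ : 0 ≤ (K - 1) / D := Int.ediv_nonneg (by omega) hD.le
  have h₁ := Int.ediv_mul_le (K - 1) hD.ne'
  have h₂ := Int.lt_ediv_add_one_mul_self (K - 1) hD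
  refine ⟨(K - 1) / D + 1, by omega, ?_, by linarith, by linarith⟩
  by_contra! hN
  nlinarith

theorem exists_rect_sub_rect {x y α β c : ℤ} (hx : 0 ≤ x) (hy : 0 ≤ y) (hα : 0 ≤ α)
    (hβ : 0 ≤ β) (hc₁ : x * y ≤ c) (hc₂ : c ≤ (x + α) * (y + β)) :
    ∃ u v n e, 0 ≤ u ∧ u ≤ α ∧ 0 ≤ v ∧ v ≤ β ∧ 0 ≤ n ∧ n ≤ y + v ∧ 0 ≤ e ∧ e ≤ x + u ∧
      c = (x + u) * (y + v) - n * e := by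
  rcases hc₁.eq_or_lt with rfl | hc₁
  · exact ⟨0, 0, 0, 0, le_rfl, hα, le_rfl, hβ, le_rfl, by linarith, le_rfl, by linarith, by ring⟩
  rcases le_or_gt c ((x + α) * y) with h | h
  · obtain ⟨u, hu₁, hu₂, hlo, hhi⟩ :=
      exists_ceil_div (D := y) (K := c - x * y) (N := α) (by nlinarith) (by linarith)
        (by linarith)
    exact ⟨u, 0, y * u - (c - x * y), 1, by omega, hu₂, le_rfl, hβ, by linarith, by linarith,
      zero_le_one, by omega, by ring⟩
  · obtain ⟨v, hv₁, hv₂, hlo, hhi⟩ :=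
      exists_ceil_div (D := x + α) (K := c - (x + α) * y) (N := β) (by nlinarith) (by linarith)
        (by linarith)
    exact ⟨α, v, 1, (x + α) * v - (c - (x + α) * y), hα, le_rfl, by omega, hv₂, zero_le_one,
      by omega, by linarith, by linarith, by ring⟩

theorem sevenBlockRep_of_mul_le {x y α β c : ℤ} (hx : 0 ≤ x) (hy : 0 ≤ y) (hα : 0 ≤ α)
    (hβ : 0 ≤ β) (hc₁ : x * y ≤ c) (hc₂ : c ≤ (x + α) * (y + β)) :
    SevenBlockRep x y c (x + 2 * α) (y + 2 * β) := by
  obtain ⟨u, v, n, e, hu₀, hu, hv₀, hv, hn₀, hn, he₀, he, rfl⟩ :=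
    exists_rect_sub_rect hx hy hα hβ hc₁ hc₂
  refine ⟨0, -v, x + u - e, n, e, y + v - n, -u, by ring, by ring, by ring, ?_, ?_⟩
  · rw [abs_zero, abs_of_nonneg (by linarith : 0 ≤ x + u - e), abs_of_nonneg he₀, abs_neg,
      abs_of_nonneg hu₀]
    linarith
  · rw [abs_neg, abs_of_nonneg hv₀, abs_of_nonneg hn₀, abs_of_nonneg (by linarith : 0 ≤ y + v - n)]
    linarith

theorem sevenBlockRep_of_pos_of_lt_mul {x y c A B : ℤ} (hy : 0 ≤ y) (hxA : x ≤ A)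
    (hyB : y ≤ B) (hc₀ : 0 < c) (hc : c < x * y) : SevenBlockRep x y c A B := by
  obtain ⟨q, hq₁, hqy, hlo, hhi⟩ :=
    exists_ceil_div (D := x) (K := c) (N := y) (by nlinarith) hc₀ hc.le
  refine ⟨0, y - q, c - x * (q - 1), 1, x * q - c, q - 1, 0, by ring, by ring, by ring, ?_, ?_⟩
  · rw [abs_zero, abs_of_nonneg (by linarith : 0 ≤ c - x * (q - 1)),
      abs_of_nonneg (by linarith : 0 ≤ x * q - c)]
    linarith
  · rw [abs_of_nonneg (by linarith : 0 ≤ y - q), abs_one, abs_of_nonneg (by linarith : 0 ≤ q - 1)]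
    linarith

theorem sevenBlockRep_of_nonneg {x y c A B : ℤ} (hx : 0 ≤ x) (hy : 0 ≤ y) (hxA : x ≤ A)
    (hyB : y ≤ B) (hA : Even (A - x)) (hB : Even (B - y))
    (h : 2 * |2 * c - x * y| + 2 * (x * y) ≤ (A + x) * (B + y)) : SevenBlockRep x y c A B := by
  obtain ⟨α, hα⟩ := hA
  obtain ⟨β, hβ⟩ := hB
  obtain rfl : A = x + 2 * α := by omega
  obtain rfl : B = y + 2 * β := by omega
  obtain ⟨h₁, h₂⟩ := abs_le.mp (by nlinarith : |2 * c - x * y| ≤ 2 * ((x + α) * (y + β)) - x * y)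
  rcases le_or_gt (x * y) c with hc | hc
  · exact sevenBlockRep_of_mul_le hx hy (by omega) (by omega) hc (by linarith)
  rcases le_or_gt c 0 with hc₀ | hc₀
  · simpa using (sevenBlockRep_of_mul_le hx hy (by omega) (by omega) (c := x * y - c)
      (by linarith) (by linarith)).reverse
  · exact sevenBlockRep_of_pos_of_lt_mul hy hxA hyB hc₀ hc

theorem sevenBlockRep_of_area {x y c A B : ℤ} (hxA : |x| ≤ A) (hyB : |y| ≤ B)
    (hA : Even (A - x)) (hB : Even (B - y))
    (h : 2 * |2 * c - x * y| + 2 * |x * y| ≤ (A + |x|) * (B + |y|)) :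
    SevenBlockRep x y c A B := by
  wlog hy : 0 ≤ y generalizing y c
  · have h' : 2 * |2 * -c - x * -y| + 2 * |x * -y| ≤ (A + |x|) * (B + |-y|) := by
      rwa [show 2 * -c - x * -y = -(2 * c - x * y) by ring, mul_neg, abs_neg, abs_neg, abs_neg]
    simpa using (this (by rwa [abs_neg]) (by rwa [sub_neg_eq_add, Int.even_add, ← Int.even_sub])
      h' (by linarith)).negY
  wlog hx : 0 ≤ x generalizing x c
  · have h' : 2 * |2 * -c - -x * y| + 2 * |-x * y| ≤ (A + |-x|) * (B + |y|) := by
      rwa [show 2 * -c - -x * y = -(2 * c - x * y) by ring, neg_mul, abs_neg, abs_neg, abs_neg]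
    simpa using (this (by rwa [abs_neg]) (by rwa [sub_neg_eq_add, Int.even_add, ← Int.even_sub])
      h' (by linarith)).negX
  rw [abs_of_nonneg hx] at hxA h
  rw [abs_of_nonneg hy] at hyB h
  rw [abs_of_nonneg (mul_nonneg hx hy)] at h
  exact sevenBlockRep_of_nonneg hx hy hxA hyB hA hB h

theorem SevenBlockRep.exists_word {x y c A B : ℤ} (h : SevenBlockRep x y c A B) (f : Bool) :
    ∃ w : List SLetter, coordS w = ⟨x, y, c, f⟩ ∧ (w.length : ℤ) ≤ A + B + 7 := by
  obtain ⟨p₀, p₁, p₂, p₃, p₄, p₅, p₆, rfl, rfl, rfl, hA, hB⟩ := h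
  refine ⟨[SLetter.t].intercalate ([p₀, p₁, p₂, p₃, p₄, p₅, p₆].map apowS) ++
    if f then [.t] else [], ?_, ?_⟩
  · cases f <;>
      simp [coordS, List.foldl_append, foldl_step_apowS, Coord.addA, Coord.step, Coord.flipT]
  · cases f <;>
      simp only [List.map_cons, List.map_nil, List.intercalate_cons_cons,
        List.intercalate_singleton, List.length_append, List.length_cons, List.length_nil,
        length_apowS, Bool.false_eq_true, if_true, if_false] <;>
      push_cast <;> linarith

theorem Coord.Feasible.sevenBlockRep {s : Coord} {A B : ℤ} (h : s.Feasible A B) :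
    SevenBlockRep s.x s.y s.c A B :=
  sevenBlockRep_of_area h.abs_x_le h.2.2.1 h.1 h.2.1 h.area_bound

/-- If `w` is a geodesic word over `S = {a, a⁻¹, t}` for the group `Ĥ`,
then `w` contains at most 7 instances of the letter `t`. -/
theorem geodesic_at_most_seven_t (w : List SLetter) (hw : IsGeodesicS w) :
    w.count SLetter.t ≤ 7 := by
  by_contra! hw₈
  obtain ⟨A, B, hlen, hfeas⟩ := feasible_coordS w
  obtain ⟨w', hw', hlen'⟩ := hfeas.sevenBlockRep.exists_word (coordS w).flip
  have := lenS_le_length (evalS_eq_of_coordS_eq (w' := w) hw')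
  rw [IsGeodesicS] at hw
  omega
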